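/- Let k ≥ 1, K̂ = [-1,1]³, and let H_k(K̂) be the enriched Raviart–Thomas space (P_{k,k-1,k-1} ⊕ E_{k,x}) × (P_{k-1,k,k-1} ⊕ E_{k,y}) × (P_{k-1,k-1,k} ⊕ E_{k,z}) with E_{k,x} = x^{k+1}(P_{k-1}(y)+P_{k-1}(z)) etc. A function q̂ ∈ H_k(K̂) vanishes identically if: (1) ∫_{ê} (q̂·ν̂) p̂ = 0 for all p̂ ∈ Q_{k-1}(ê) on each face ê of K̂; (2) ∫_{K̂} q̂₁ p̂ = 0 for all p̂ ∈ J_{k-1}(ξ)(P_{k-1}(η)+P_{k-1}(ζ)); (3),(4) the analogous conditions for q̂₂, q̂₃; and (5) ∫_{K̂} q̂·p̂ = 0 for all p̂ ∈ P_{k-2,k-1,k-1} × P_{k-1,k-2,k-1} × P_{k-1,k-1,k-2}. -/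

import Mathlib

open intervalIntegral MvPolynomial

/-- The Jacobi-type polynomials of the paper. -/
noncomputable def Jac (l : ℕ) (ξ : ℝ) : ℝ :=
  ((l + 1).factorial : ℝ) ^ 2 *
    ∑ s ∈ Finset.range (l + 1),
      (1 / ((s.factorial * (l + 1 - s).factorial * (s + 1).factorial * (l - s).factorial : ℕ) : ℝ)) *
        ((ξ - 1) / 2) ^ (l - s) * ((ξ + 1) / 2) ^ s

/-- Evaluation of a trivariate polynomial (variables `0,1,2` are `ξ,η,ζ`). -/
noncomputable def ev3 (p : MvPolynomial (Fin 3) ℝ) (x y z : ℝ) : ℝ :=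
  MvPolynomial.eval ![x, y, z] p

/-- Membership in the anisotropic space `P_{a,b,c}` of polynomials of degree `≤ a` in the
first variable, `≤ b` in the second, and `≤ c` in the third. -/
def memP3 (a b c : ℕ) (p : MvPolynomial (Fin 3) ℝ) : Prop :=
  MvPolynomial.degreeOf 0 p ≤ a ∧ MvPolynomial.degreeOf 1 p ≤ b ∧
    MvPolynomial.degreeOf 2 p ≤ c

/-- First component of the enriched Raviart–Thomas space:
`P_{k,k-1,k-1} ⊕ x^{k+1}(P_{k-1}(y) + P_{k-1}(z))`. -/
def memRT (k : ℕ) (u v w : Fin 3) (q : MvPolynomial (Fin 3) ℝ) : Prop :=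
  ∃ p : MvPolynomial (Fin 3) ℝ, ∃ cu cw : ℕ → ℝ,
    MvPolynomial.degreeOf u p ≤ k ∧ MvPolynomial.degreeOf v p ≤ k - 1 ∧
    MvPolynomial.degreeOf w p ≤ k - 1 ∧
    q = p + X u ^ (k + 1) *
      ((∑ j ∈ Finset.range k, MvPolynomial.C (cu j) * X v ^ j) +
        ∑ j ∈ Finset.range k, MvPolynomial.C (cw j) * X w ^ j)

/-!
On a face `x = s = ±1` the trace of `q̂₁` lies in `Q_{k-1}` and is orthogonal to `Q_{k-1}`, hence
vanishes; so `q̂₁ = (x² - 1) r`. Comparing degrees, `r ∈ P_{k-1,k-1,k-1}` and the coefficient of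
`x^{k-1}` in `r` is the bubble part `B(y, z) ∈ P_{k-1}(y) + P_{k-1}(z)` of `q̂₁`. Trading `x^{k-1}`
for `J_{k-1}(x)` (only its exact degree matters) puts `r` in the span of the interior test
functions, so `∫ (x² - 1) r² = ∫ q̂₁ r = 0` and `r = 0`. The other two components reduce to the
first by permuting the variables, which leaves the integral over the cube unchanged.
-/

open Set
open scoped Polynomial

section Integrals

variable {a b : ℝ}

theorem eq_zero_on_Icc_of_integral_eq_zero {f : ℝ → ℝ} (hab : a < b) (hf : Continuous f)
    (hf0 : ∀ x ∈ Icc a b, 0 ≤ f x) (h : ∫ x in a..b, f x = 0) : ∀ x ∈ Icc a b, f x = 0 := by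
  by_contra! ⟨x, hx, hfx⟩
  have := intervalIntegral.integral_pos hab hf.continuousOn
    (fun y hy => hf0 y (Ioc_subset_Icc_self hy)) ⟨x, hx, (hf0 x hx).lt_of_ne' hfx⟩
  exact this.ne' h

theorem eq_zero_on_Icc_of_integral_integral_eq_zero {f : ℝ → ℝ → ℝ} (hab : a < b)
    (hf : Continuous (Function.uncurry f)) (hf0 : ∀ x ∈ Icc a b, ∀ y ∈ Icc a b, 0 ≤ f x y)
    (h : ∫ x in a..b, ∫ y in a..b, f x y = 0) : ∀ x ∈ Icc a b, ∀ y ∈ Icc a b, f x y = 0 := by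
  have hinner := eq_zero_on_Icc_of_integral_eq_zero hab (by fun_prop)
    (fun x hx => intervalIntegral.integral_nonneg hab.le (hf0 x hx)) h
  exact fun x hx => eq_zero_on_Icc_of_integral_eq_zero hab (by fun_prop) (hf0 x hx) (hinner x hx)

theorem eq_zero_on_Icc_of_integral_integral_integral_eq_zero {f : ℝ → ℝ → ℝ → ℝ} (hab : a < b)
    (hf : Continuous fun v : ℝ × ℝ × ℝ => f v.1 v.2.1 v.2.2)
    (hf0 : ∀ x ∈ Icc a b, ∀ y ∈ Icc a b, ∀ z ∈ Icc a b, 0 ≤ f x y z)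
    (h : ∫ x in a..b, ∫ y in a..b, ∫ z in a..b, f x y z = 0) :
    ∀ x ∈ Icc a b, ∀ y ∈ Icc a b, ∀ z ∈ Icc a b, f x y z = 0 := by
  have hinner := eq_zero_on_Icc_of_integral_integral_eq_zero
    (f := fun x y => ∫ z in a..b, f x y z) hab (by fun_prop)
    (fun x hx y hy => intervalIntegral.integral_nonneg hab.le (hf0 x hx y hy)) h
  exact fun x hx y hy =>
    eq_zero_on_Icc_of_integral_eq_zero hab (by fun_prop) (hf0 x hx y hy) (hinner x hx y hy)

theorem integral_integral_add {f g : ℝ → ℝ → ℝ} (hf : Continuous (Function.uncurry f))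
    (hg : Continuous (Function.uncurry g)) :
    ∫ x in a..b, ∫ y in a..b, (f x y + g x y) =
      (∫ x in a..b, ∫ y in a..b, f x y) + ∫ x in a..b, ∫ y in a..b, g x y := by
  have hinner (x : ℝ) :
      ∫ y in a..b, (f x y + g x y) = (∫ y in a..b, f x y) + ∫ y in a..b, g x y :=
    intervalIntegral.integral_add ((by fun_prop : Continuous (f x)).intervalIntegrable _ _)
      ((by fun_prop : Continuous (g x)).intervalIntegrable _ _)
  simp only [hinner]
  exact intervalIntegral.integral_add ((by fun_prop : Continuous _).intervalIntegrable _ _)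
    ((by fun_prop : Continuous _).intervalIntegrable _ _)

theorem integral_integral_integral_add {f g : ℝ → ℝ → ℝ → ℝ}
    (hf : Continuous fun v : ℝ × ℝ × ℝ => f v.1 v.2.1 v.2.2)
    (hg : Continuous fun v : ℝ × ℝ × ℝ => g v.1 v.2.1 v.2.2) :
    ∫ x in a..b, ∫ y in a..b, ∫ z in a..b, (f x y z + g x y z) =
      (∫ x in a..b, ∫ y in a..b, ∫ z in a..b, f x y z) +
        ∫ x in a..b, ∫ y in a..b, ∫ z in a..b, g x y z := by
  have hinner (x : ℝ) := integral_integral_add (a := a) (b := b) (f := f x) (g := g x)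
    (by fun_prop) (by fun_prop)
  simp only [hinner]
  exact intervalIntegral.integral_add ((by fun_prop : Continuous _).intervalIntegrable _ _)
    ((by fun_prop : Continuous _).intervalIntegrable _ _)

theorem integral_integral_swap_of_continuous {f : ℝ → ℝ → ℝ}
    (hf : Continuous (Function.uncurry f)) :
    ∫ x in a..b, ∫ y in a..b, f x y = ∫ y in a..b, ∫ x in a..b, f x y :=
  MeasureTheory.intervalIntegral_intervalIntegral_swap <|
    (hf.continuousOn.integrableOn_compact (isCompact_uIcc.prod isCompact_uIcc)).mono_set
      (prod_mono uIoc_subset_uIcc uIoc_subset_uIcc)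

end Integrals

@[fun_prop]
theorem Continuous.ev3 {α : Type*} [TopologicalSpace α] (p : MvPolynomial (Fin 3) ℝ)
    {x y z : α → ℝ} (hx : Continuous x) (hy : Continuous y) (hz : Continuous z) :
    Continuous fun t => ev3 p (x t) (y t) (z t) :=
  (continuous_eval p).comp (continuous_pi fun i => by fin_cases i <;> assumption)

@[fun_prop]
theorem Continuous.eval_vec2 {α : Type*} [TopologicalSpace α] (p : MvPolynomial (Fin 2) ℝ)
    {x y : α → ℝ} (hx : Continuous x) (hy : Continuous y) :
    Continuous fun t => eval ![x t, y t] p :=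
  (continuous_eval p).comp (continuous_pi fun i => by fin_cases i <;> assumption)

@[simp]
theorem ev3_add (p q : MvPolynomial (Fin 3) ℝ) (x y z : ℝ) :
    ev3 (p + q) x y z = ev3 p x y z + ev3 q x y z := map_add _ p q

@[simp]
theorem ev3_mul (p q : MvPolynomial (Fin 3) ℝ) (x y z : ℝ) :
    ev3 (p * q) x y z = ev3 p x y z * ev3 q x y z := map_mul _ p q

noncomputable def squareIntegral : MvPolynomial (Fin 2) ℝ →ₗ[ℝ] ℝ where
  toFun p := ∫ y in (-1 : ℝ)..1, ∫ z in (-1 : ℝ)..1, eval ![y, z] p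
  map_add' p q := by
    simp only [map_add]
    exact integral_integral_add (by fun_prop) (by fun_prop)
  map_smul' c p := by simp [intervalIntegral.integral_const_mul]

noncomputable def cubeIntegral : MvPolynomial (Fin 3) ℝ →ₗ[ℝ] ℝ where
  toFun p := ∫ x in (-1 : ℝ)..1, ∫ y in (-1 : ℝ)..1, ∫ z in (-1 : ℝ)..1, ev3 p x y z
  map_add' p q := by
    simp only [ev3_add]
    exact integral_integral_integral_add (by fun_prop) (by fun_prop)
  map_smul' c p := by simp [ev3, intervalIntegral.integral_const_mul]

theorem squareIntegral_apply (p : MvPolynomial (Fin 2) ℝ) :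
    squareIntegral p = ∫ y in (-1 : ℝ)..1, ∫ z in (-1 : ℝ)..1, eval ![y, z] p := rfl

theorem cubeIntegral_apply (p : MvPolynomial (Fin 3) ℝ) :
    cubeIntegral p = ∫ x in (-1 : ℝ)..1, ∫ y in (-1 : ℝ)..1, ∫ z in (-1 : ℝ)..1, ev3 p x y z := rfl

theorem ev3_rename (σ : Fin 3 → Fin 3) (p : MvPolynomial (Fin 3) ℝ) (x y z : ℝ) :
    ev3 (rename σ p) x y z = ev3 p (![x, y, z] (σ 0)) (![x, y, z] (σ 1)) (![x, y, z] (σ 2)) := by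
  simp only [ev3, eval_rename]
  congr 2
  ext i
  fin_cases i <;> rfl

theorem cubeIntegral_rename (σ : Equiv.Perm (Fin 3)) (p : MvPolynomial (Fin 3) ℝ) :
    cubeIntegral (rename σ p) = cubeIntegral p := by
  have hσ : σ ∈ Submonoid.closure (range fun i : Fin 2 => Equiv.swap i.castSucc i.succ) := by
    rw [Equiv.Perm.mclosure_swap_castSucc_succ]; trivial
  induction hσ using Submonoid.closure_induction generalizing p with
  | mem τ hτ =>
    obtain ⟨i, rfl⟩ := hτ
    simp only [cubeIntegral_apply, ev3_rename]
    fin_cases i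
    · exact integral_integral_swap_of_continuous
        (f := fun x y => ∫ z in (-1 : ℝ)..1, ev3 p y x z) (by fun_prop)
    · refine intervalIntegral.integral_congr fun x _ => ?_
      exact integral_integral_swap_of_continuous (f := fun y z => ev3 p x z y) (by fun_prop)
  | one => simp
  | mul σ τ _ _ hσ hτ => rw [Equiv.Perm.coe_mul, ← rename_rename, hσ, hτ]

theorem MvPolynomial.map_eq_zero_of_forall_monomial {σ R M : Type*} [CommSemiring R]
    [AddCommMonoid M] [Module R M] (L : MvPolynomial σ R →ₗ[R] M) {g : MvPolynomial σ R}
    (h : ∀ m ∈ g.support, L (monomial m 1) = 0) : L g = 0 := by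
  rw [g.as_sum, map_sum]
  refine Finset.sum_eq_zero fun m hm => ?_
  rw [← mul_one (coeff m g), ← smul_eq_mul, ← smul_monomial, map_smul, h m hm, smul_zero]

theorem eval_vec2_monomial (m : Fin 2 →₀ ℕ) (y z : ℝ) :
    eval ![y, z] (monomial m (1 : ℝ)) = y ^ m 0 * z ^ m 1 := by
  simp [eval_monomial, Finsupp.prod_fintype, Fin.prod_univ_two]

theorem ev3_monomial (m : Fin 3 →₀ ℕ) (x y z : ℝ) :
    ev3 (monomial m 1) x y z = x ^ m 0 * y ^ m 1 * z ^ m 2 := by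
  simp [ev3, eval_monomial, Finsupp.prod_fintype, Fin.prod_univ_three]

theorem eq_zero_of_forall_integral_mul_pow_eq_zero {n : ℕ} {p : MvPolynomial (Fin 2) ℝ}
    (h0 : degreeOf 0 p < n) (h1 : degreeOf 1 p < n)
    (h : ∀ a < n, ∀ b < n,
      ∫ y in (-1 : ℝ)..1, ∫ z in (-1 : ℝ)..1, eval ![y, z] p * y ^ a * z ^ b = 0) :
    p = 0 := by
  have hsq : squareIntegral (p * p) = 0 := by
    refine map_eq_zero_of_forall_monomial (squareIntegral ∘ₗ LinearMap.mulLeft ℝ p) fun m hm => ?_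
    have := h (m 0) ((monomial_le_degreeOf 0 hm).trans_lt h0) (m 1)
      ((monomial_le_degreeOf 1 hm).trans_lt h1)
    simpa [squareIntegral_apply, eval_vec2_monomial, mul_assoc] using this
  have hzero := eq_zero_on_Icc_of_integral_integral_eq_zero (a := -1) (b := 1)
    (f := fun y z => eval ![y, z] p ^ 2) (by norm_num) (by fun_prop) (fun _ _ _ _ => sq_nonneg _)
    (by simpa [squareIntegral_apply, sq] using hsq)
  refine funext_set (fun _ => Set.Icc (-1 : ℝ) 1) (fun _ => Set.Icc_infinite (by norm_num))
    fun v hv => ?_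
  have hv2 : ![v 0, v 1] = v := by ext i; fin_cases i <;> rfl
  have := hzero (v 0) (hv 0 trivial) (v 1) (hv 1 trivial)
  rwa [hv2, sq_eq_zero_iff, ← map_zero (eval v)] at this

theorem eq_zero_of_cubeIntegral_X_zero_sq_sub_one_mul_self {r : MvPolynomial (Fin 3) ℝ}
    (h : cubeIntegral ((X 0 ^ 2 - 1) * r * r) = 0) : r = 0 := by
  have hzero := eq_zero_on_Icc_of_integral_integral_integral_eq_zero (a := -1) (b := 1)
    (f := fun x y z => (1 - x ^ 2) * ev3 r x y z ^ 2) (by norm_num) (by fun_prop)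
    (fun x hx _ _ _ _ => mul_nonneg (by nlinarith [hx.1, hx.2]) (sq_nonneg _))
    (by
      have e (x y z : ℝ) :
          (1 - x ^ 2) * ev3 r x y z ^ 2 = -ev3 ((X 0 ^ 2 - 1) * r * r) x y z := by
        simp [ev3]; ring
      simpa only [e, intervalIntegral.integral_neg, neg_eq_zero, cubeIntegral_apply] using h)
  refine funext_set (fun _ => Set.Ioo (-1 : ℝ) 1) (fun _ => Set.Ioo_infinite (by norm_num))
    fun v hv => ?_
  have hx := hv 0 trivial
  have := hzero (v 0) (Set.Ioo_subset_Icc_self hx) (v 1) (Set.Ioo_subset_Icc_self (hv 1 trivial))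
    (v 2) (Set.Ioo_subset_Icc_self (hv 2 trivial))
  have hpos : 1 - v 0 ^ 2 ≠ 0 := by nlinarith [hx.1, hx.2]
  have hv3 : ![v 0, v 1, v 2] = v := by ext i; fin_cases i <;> rfl
  have := (mul_eq_zero.mp this).resolve_left hpos
  rwa [ev3, hv3, sq_eq_zero_iff, ← map_zero (eval v)] at this

theorem Polynomial.isMonicOfDegree_C_inv_mul_sum {ι K : Type*} [Field K] {s : Finset ι}
    {c : ι → K} {M : ι → K[X]} {n : ℕ} (hM : ∀ i ∈ s, (M i).IsMonicOfDegree n)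
    (hc : ∑ i ∈ s, c i ≠ 0) :
    (C (∑ i ∈ s, c i)⁻¹ * ∑ i ∈ s, C (c i) * M i).IsMonicOfDegree n := by
  rw [isMonicOfDegree_iff]
  constructor
  · refine natDegree_C_mul_le _ _ |>.trans <| natDegree_sum_le_of_forall_le _ _ fun i hi => ?_
    exact (natDegree_C_mul_le _ _).trans (hM i hi).natDegree_eq.le
  · have hcoeff (i) (hi : i ∈ s) : c i * (M i).coeff n = c i := by
      rw [((isMonicOfDegree_iff _ _).mp (hM i hi)).2, mul_one]
    simp only [coeff_C_mul, finsetSum_coeff]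
    rw [Finset.sum_congr rfl hcoeff, inv_mul_cancel₀ hc]

noncomputable def jacWeight (l s : ℕ) : ℝ :=
  ((l + 1).factorial : ℝ) ^ 2 /
    (((s.factorial * (l + 1 - s).factorial * (s + 1).factorial * (l - s).factorial : ℕ) : ℝ) *
      2 ^ l)

noncomputable def jacPoly (l : ℕ) : ℝ[X] :=
  ∑ s ∈ Finset.range (l + 1), Polynomial.C (jacWeight l s) *
    ((Polynomial.X - Polynomial.C 1) ^ (l - s) * (Polynomial.X + Polynomial.C 1) ^ s)

theorem eval_jacPoly (l : ℕ) (ξ : ℝ) : (jacPoly l).eval ξ = Jac l ξ := by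
  simp only [jacPoly, Jac, Polynomial.eval_finsetSum, Finset.mul_sum]
  refine Finset.sum_congr rfl fun s hs => ?_
  have hsl : l - s + s = l := Nat.sub_add_cancel (Nat.lt_succ_iff.mp (Finset.mem_range.mp hs))
  simp only [Polynomial.eval_mul, Polynomial.eval_C, Polynomial.eval_pow, Polynomial.eval_sub,
    Polynomial.eval_add, Polynomial.eval_X, jacWeight, div_pow]
  rw [show (2 : ℝ) ^ l = 2 ^ (l - s) * 2 ^ s by rw [← pow_add, hsl]]
  field_simp

theorem exists_isMonicOfDegree_C_mul_jacPoly (l : ℕ) :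
    ∃ c : ℝ, (Polynomial.C c * jacPoly l).IsMonicOfDegree l := by
  refine ⟨_, Polynomial.isMonicOfDegree_C_inv_mul_sum (fun s hs => ?_) ?_⟩
  · have := ((Polynomial.isMonicOfDegree_X_sub_one (1 : ℝ)).pow (l - s)).mul
      ((Polynomial.isMonicOfDegree_X_add_one (1 : ℝ)).pow s)
    rwa [one_mul, one_mul,
      Nat.sub_add_cancel (Nat.lt_succ_iff.mp (Finset.mem_range.mp hs))] at this
  · refine (Finset.sum_pos (fun s _ => ?_) Finset.nonempty_range_add_one).ne'
    unfold jacWeight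
    have := Nat.factorial_pos
    positivity

theorem Polynomial.natDegree_X_pow_sub_X_sq_sub_one_mul_le {R : Type*} [CommRing R]
    [Nontrivial R] {M : R[X]} {n : ℕ} (hM : M.IsMonicOfDegree n) :
    (X ^ (n + 2) - (X ^ 2 - 1) * M).natDegree ≤ n + 1 := by
  have hmul := ((isMonicOfDegree_X_pow R 2).sub (q := 1) (by simp)).mul hM
  rw [add_comm] at hmul
  exact Nat.lt_succ_iff.mp ((isMonicOfDegree_X_pow R (n + 2)).natDegree_sub_lt (by omega) hmul)

section Degrees

variable {σ R : Type*} [CommSemiring R]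

theorem degreeOf_toMvPolynomial_of_ne (P : R[X]) {i j : σ} (h : i ≠ j) :
    degreeOf i (P.toMvPolynomial j) = 0 := by
  classical
  rw [Polynomial.toMvPolynomial, Polynomial.aeval_eq_sum_range]
  refine Nat.eq_zero_of_le_zero <| (degreeOf_sum_le _ _ _).trans (Finset.sup_le fun n hn => ?_)
  rw [smul_eq_C_mul]
  exact (degreeOf_C_mul_le _ _ _).trans (degreeOf_X_pow_of_ne _ h).le

theorem degreeOf_toMvPolynomial_le [Nontrivial R] (P : R[X]) (i j : σ) :
    degreeOf i (P.toMvPolynomial j) ≤ P.natDegree := by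
  classical
  obtain rfl | h := eq_or_ne i j
  · rw [Polynomial.toMvPolynomial, Polynomial.aeval_eq_sum_range]
    refine (degreeOf_sum_le _ _ _).trans (Finset.sup_le fun n hn => ?_)
    rw [smul_eq_C_mul]
    refine (degreeOf_C_mul_le _ _ _).trans ?_
    rw [degreeOf_X_self_pow]
    exact Nat.lt_succ_iff.mp (Finset.mem_range.mp hn)
  · rw [degreeOf_toMvPolynomial_of_ne P h]
    exact Nat.zero_le _

theorem sum_C_mul_X_pow_eq_toMvPolynomial (c : ℕ → R) (k : ℕ) (v : σ) :
    ∑ j ∈ Finset.range k, C (c j) * X v ^ j =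
      (∑ j ∈ Finset.range k, Polynomial.C (c j) * Polynomial.X ^ j).toMvPolynomial v := by
  simp [map_sum]

theorem natDegree_sum_C_mul_X_pow_lt (c : ℕ → R) {k : ℕ} (hk : 1 ≤ k) :
    (∑ j ∈ Finset.range k, Polynomial.C (c j) * Polynomial.X ^ j).natDegree < k := by
  refine Nat.lt_of_le_sub_one hk <| Polynomial.natDegree_sum_le_of_forall_le _ _ fun j hj => ?_
  exact (Polynomial.natDegree_C_mul_X_pow_le _ _).trans
    (Nat.le_sub_one_of_lt (Finset.mem_range.mp hj))

end Degrees

theorem Polynomial.X_sq_sub_one_dvd {A : Type*} [CommRing A] {P : A[X]} (h2 : IsUnit (2 : A))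
    (h1 : P.IsRoot 1) (hm1 : P.IsRoot (-1)) : Polynomial.X ^ 2 - 1 ∣ P := by
  have hsplit : (Polynomial.X ^ 2 - 1 : A[X]) =
      (Polynomial.X - Polynomial.C 1) * (Polynomial.X - Polynomial.C (-1)) := by
    simp only [map_neg, map_one]; ring
  rw [hsplit]
  refine (Polynomial.isCoprime_X_sub_C_of_isUnit_sub ?_).mul_dvd
    (Polynomial.dvd_iff_isRoot.mpr h1) (Polynomial.dvd_iff_isRoot.mpr hm1)
  rwa [sub_neg_eq_add, one_add_one_eq_two]

section FaceTrace

variable {n : ℕ} {K : Type*} [Field K]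

noncomputable def faceTrace (q : MvPolynomial (Fin (n + 1)) K) (s : K) :
    MvPolynomial (Fin n) K :=
  (finSuccEquiv K n q).eval (C s)

theorem eval_faceTrace (q : MvPolynomial (Fin (n + 1)) K) (s : K) (v : Fin n → K) :
    eval v (faceTrace q s) = eval (Fin.cons s v) q := by
  rw [faceTrace, eval_polynomial_eval_finSuccEquiv, eval_C]
  rfl

theorem degreeOf_faceTrace_le (q : MvPolynomial (Fin (n + 1)) K) (s : K) (i : Fin n) :
    degreeOf i (faceTrace q s) ≤ degreeOf i.succ q := by
  rw [faceTrace, Polynomial.eval_eq_sum_range]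
  refine (degreeOf_sum_le _ _ _).trans (Finset.sup_le fun m _ => ?_)
  rw [← map_pow]
  exact (degreeOf_mul_C_le _ _ _).trans (degreeOf_coeff_finSuccEquiv q i m)

theorem X_zero_sq_sub_one_dvd [NeZero (2 : K)] {q : MvPolynomial (Fin (n + 1)) K}
    (h1 : faceTrace q 1 = 0) (hm1 : faceTrace q (-1) = 0) : X 0 ^ 2 - 1 ∣ q := by
  rw [← map_dvd_iff (finSuccEquiv K n)]
  simp only [map_sub, map_pow, finSuccEquiv_X_zero, map_one]
  refine Polynomial.X_sq_sub_one_dvd ?_ ?_ ?_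
  · exact (IsUnit.mk0 (2 : K) two_ne_zero).map C
  · simpa [faceTrace] using h1
  · simpa [faceTrace] using hm1

theorem degreeOf_X_zero_sq_sub_one :
    degreeOf 0 (X 0 ^ 2 - 1 : MvPolynomial (Fin (n + 1)) K) = 2 := by
  rw [← natDegree_finSuccEquiv]
  simpa [finSuccEquiv_X_zero] using
    Polynomial.natDegree_X_pow_sub_C (n := 2) (r := (1 : MvPolynomial (Fin n) K))

end FaceTrace

/-- The test functions of conditions (2)–(5) for the component normal to the faces `x_u = ±1`:
`P_{k-2,k-1,k-1}` (degrees in `x_u, x_v, x_w`) and `J_{k-1}(x_u) x_v^j`, `J_{k-1}(x_u) x_w^j`. -/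
def rtTestSet (k : ℕ) (u v w : Fin 3) : Set (MvPolynomial (Fin 3) ℝ) :=
  {g | degreeOf u g + 2 ≤ k ∧ degreeOf v g < k ∧ degreeOf w g < k} ∪
    {g | ∃ j < k, g = (jacPoly (k - 1)).toMvPolynomial u * X v ^ j ∨
      g = (jacPoly (k - 1)).toMvPolynomial u * X w ^ j}

theorem mul_toMvPolynomial_mem_span {σ R : Type*} [CommSemiring R]
    {S : Set (MvPolynomial σ R)} {J : MvPolynomial σ R} {P : R[X]} {v : σ} {k : ℕ}
    (hP : P.natDegree < k) (hS : ∀ j < k, J * X v ^ j ∈ S) :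
    J * P.toMvPolynomial v ∈ Submodule.span R S := by
  rw [Polynomial.toMvPolynomial, Polynomial.aeval_eq_sum_range, Finset.mul_sum]
  refine Submodule.sum_mem _ fun j hj => ?_
  rw [mul_smul_comm]
  exact Submodule.smul_mem _ _ <| Submodule.subset_span <|
    hS j ((Nat.lt_succ_iff.mp (Finset.mem_range.mp hj)).trans_lt hP)

theorem mem_rtTestSet_of_mul_eq {k : ℕ} {p r : MvPolynomial (Fin 3) ℝ} {A Pv Pw : ℝ[X]}
    (hp0 : degreeOf 0 p ≤ k) (hp1 : degreeOf 1 p < k) (hp2 : degreeOf 2 p < k)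
    (hA : A.natDegree ≤ k) (hPv : Pv.natDegree < k) (hPw : Pw.natDegree < k) (hr : r ≠ 0)
    (h : (X 0 ^ 2 - 1) * r = p + A.toMvPolynomial 0 * (Pv.toMvPolynomial 1 + Pw.toMvPolynomial 2)) :
    r ∈ rtTestSet k 0 1 2 := by
  have hne : (X (0 : Fin 3) ^ 2 - 1 : MvPolynomial (Fin 3) ℝ) ≠ 0 := fun h => by
    simpa [h] using degreeOf_X_zero_sq_sub_one (n := 2) (K := ℝ)
  have hdeg (i : Fin 3) :
      degreeOf i (X (0 : Fin 3) ^ 2 - 1 : MvPolynomial (Fin 3) ℝ) + degreeOf i r ≤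
        max (degreeOf i p) (degreeOf i (A.toMvPolynomial 0) +
          max (degreeOf i (Pv.toMvPolynomial 1)) (degreeOf i (Pw.toMvPolynomial 2))) := by
    rw [← degreeOf_mul_eq hne hr, h]
    exact (degreeOf_add_le _ _ _).trans (max_le_max le_rfl
      ((degreeOf_mul_le _ _ _).trans (add_le_add le_rfl (degreeOf_add_le _ _ _))))
  have h0 := hdeg 0
  have h1 := hdeg 1
  have h2 := hdeg 2
  simp only [degreeOf_X_zero_sq_sub_one, ne_eq, Fin.reduceEq, not_false_eq_true,
    degreeOf_toMvPolynomial_of_ne] at h0 h1 h2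
  have := degreeOf_toMvPolynomial_le A (0 : Fin 3) 0
  have := degreeOf_toMvPolynomial_le Pv (1 : Fin 3) 1
  have := degreeOf_toMvPolynomial_le Pw (2 : Fin 3) 2
  refine Or.inl ⟨?_, ?_, ?_⟩ <;> omega

theorem mem_span_rtTestSet {k : ℕ} (hk : 1 ≤ k) {p r : MvPolynomial (Fin 3) ℝ} {Pv Pw : ℝ[X]}
    (hp0 : degreeOf 0 p ≤ k) (hp1 : degreeOf 1 p < k) (hp2 : degreeOf 2 p < k)
    (hPv : Pv.natDegree < k) (hPw : Pw.natDegree < k)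
    (hr : (X 0 ^ 2 - 1) * r = p + X 0 ^ (k + 1) * (Pv.toMvPolynomial 1 + Pw.toMvPolynomial 2)) :
    r ∈ Submodule.span ℝ (rtTestSet k 0 1 2) := by
  obtain ⟨c, hc⟩ := exists_isMonicOfDegree_C_mul_jacPoly (k - 1)
  set B : MvPolynomial (Fin 3) ℝ := Pv.toMvPolynomial 1 + Pw.toMvPolynomial 2
  set J := (jacPoly (k - 1)).toMvPolynomial (0 : Fin 3)
  have hJB : J * B ∈ Submodule.span ℝ (rtTestSet k 0 1 2) := by
    rw [mul_add]
    exact add_mem (mul_toMvPolynomial_mem_span hPv fun j hj => Or.inr ⟨j, hj, Or.inl rfl⟩)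
      (mul_toMvPolynomial_mem_span hPw fun j hj => Or.inr ⟨j, hj, Or.inr rfl⟩)
  -- the leading terms of `x^{k+1}` and `(x² - 1) c J(x)` cancel, so `r - c J B` has `x`-degree
  -- at most `k - 2`
  have hA := Polynomial.natDegree_X_pow_sub_X_sq_sub_one_mul_le hc
  rw [show k - 1 + 2 = k + 1 by omega, show k - 1 + 1 = k by omega] at hA
  have hrem : (X 0 ^ 2 - 1) * (r - C c * (J * B)) = p + (Polynomial.X ^ (k + 1) -
      (Polynomial.X ^ 2 - 1) * (Polynomial.C c * jacPoly (k - 1))).toMvPolynomial 0 * B := by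
    simp only [J, map_sub, map_mul, map_pow, Polynomial.toMvPolynomial_X,
      Polynomial.toMvPolynomial_C, map_one, mul_sub, hr]
    ring
  have hsplit : r = c • (J * B) + (r - C c * (J * B)) := by rw [smul_eq_C_mul]; ring
  rw [hsplit]
  refine add_mem (Submodule.smul_mem _ c hJB) ?_
  by_cases h0 : r - C c * (J * B) = 0
  · rw [h0]; exact zero_mem _
  · exact Submodule.subset_span (mem_rtTestSet_of_mul_eq hp0 hp1 hp2 hA hPv hPw h0 hrem)

section RaviartThomas

variable {k : ℕ} {u v w : Fin 3} {q : MvPolynomial (Fin 3) ℝ}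

theorem memRT.exists_toMvPolynomial (hk : 1 ≤ k) (hq : memRT k u v w q) :
    ∃ p : MvPolynomial (Fin 3) ℝ, ∃ Pv Pw : ℝ[X],
      degreeOf u p ≤ k ∧ degreeOf v p < k ∧ degreeOf w p < k ∧
      Pv.natDegree < k ∧ Pw.natDegree < k ∧
      q = p + X u ^ (k + 1) * (Pv.toMvPolynomial v + Pw.toMvPolynomial w) := by
  obtain ⟨p, cu, cw, h0, h1, h2, rfl⟩ := hq
  refine ⟨p, _, _, h0, by omega, by omega, natDegree_sum_C_mul_X_pow_lt cu hk,
    natDegree_sum_C_mul_X_pow_lt cw hk, ?_⟩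
  rw [sum_C_mul_X_pow_eq_toMvPolynomial, sum_C_mul_X_pow_eq_toMvPolynomial]

theorem memRT.symm (hq : memRT k u v w q) : memRT k u w v q := by
  obtain ⟨p, cu, cw, h0, h1, h2, rfl⟩ := hq
  exact ⟨p, cw, cu, h0, h2, h1, by rw [add_comm (∑ j ∈ Finset.range k, _)]⟩

theorem memRT.rename (σ : Equiv.Perm (Fin 3)) (hq : memRT k u v w q) :
    memRT k (σ u) (σ v) (σ w) (rename σ q) := by
  obtain ⟨p, cu, cw, h0, h1, h2, rfl⟩ := hq
  refine ⟨rename σ p, cu, cw, ?_, ?_, ?_, by simp [map_sum]⟩ <;>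
    rwa [degreeOf_rename_of_injective σ.injective]

theorem rename_mem_rtTestSet (σ : Equiv.Perm (Fin 3)) {g : MvPolynomial (Fin 3) ℝ}
    (hg : g ∈ rtTestSet k u v w) : rename σ g ∈ rtTestSet k (σ u) (σ v) (σ w) := by
  rcases hg with ⟨h0, h1, h2⟩ | ⟨j, hj, rfl | rfl⟩
  · simp only [rtTestSet, Set.mem_union, Set.mem_ofPred_eq,
      degreeOf_rename_of_injective σ.injective]
    exact Or.inl ⟨h0, h1, h2⟩
  · exact Or.inr ⟨j, hj, Or.inl (by simp)⟩
  · exact Or.inr ⟨j, hj, Or.inr (by simp)⟩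

theorem cubeIntegral_mul_eq_zero_of_moments
    (hJ : ∀ j < k,
      (∫ x in (-1 : ℝ)..1, ∫ y in (-1 : ℝ)..1, ∫ z in (-1 : ℝ)..1,
        ev3 q x y z * Jac (k - 1) (![x, y, z] u) * ![x, y, z] v ^ j) = 0 ∧
      (∫ x in (-1 : ℝ)..1, ∫ y in (-1 : ℝ)..1, ∫ z in (-1 : ℝ)..1,
        ev3 q x y z * Jac (k - 1) (![x, y, z] u) * ![x, y, z] w ^ j) = 0)
    (hbox : ∀ m : Fin 3 → ℕ, m u + 2 ≤ k → m v < k → m w < k →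
      (∫ x in (-1 : ℝ)..1, ∫ y in (-1 : ℝ)..1, ∫ z in (-1 : ℝ)..1,
        ev3 q x y z * x ^ m 0 * y ^ m 1 * z ^ m 2) = 0) :
    ∀ g ∈ rtTestSet k u v w, cubeIntegral (q * g) = 0 := by
  rintro g (⟨h0, h1, h2⟩ | ⟨j, hj, rfl | rfl⟩)
  · refine map_eq_zero_of_forall_monomial (cubeIntegral ∘ₗ LinearMap.mulLeft ℝ q) fun m hm => ?_
    have := hbox m (by have := monomial_le_degreeOf u hm; omega)
      ((monomial_le_degreeOf v hm).trans_lt h1) ((monomial_le_degreeOf w hm).trans_lt h2)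
    simpa [cubeIntegral_apply, ev3_monomial, mul_assoc] using this
  · simpa [cubeIntegral_apply, ev3, eval_jacPoly, mul_assoc] using (hJ j hj).1
  · simpa [cubeIntegral_apply, ev3, eval_jacPoly, mul_assoc] using (hJ j hj).2

theorem cubeIntegral_mul_eq_zero_of_mem_span {S : Set (MvPolynomial (Fin 3) ℝ)}
    (h : ∀ g ∈ S, cubeIntegral (q * g) = 0) {r : MvPolynomial (Fin 3) ℝ}
    (hr : r ∈ Submodule.span ℝ S) : cubeIntegral (q * r) = 0 :=
  (Submodule.span_le (p := LinearMap.ker (cubeIntegral ∘ₗ LinearMap.mulLeft ℝ q))).mpr h hr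

theorem eq_zero_of_rt_moments (hk : 1 ≤ k) (hq : memRT k 0 1 2 q)
    (hface : ∀ s : ℝ, s = 1 ∨ s = -1 → ∀ a < k, ∀ b < k,
      (∫ y in (-1 : ℝ)..1, ∫ z in (-1 : ℝ)..1, ev3 q s y z * y ^ a * z ^ b) = 0)
    (horth : ∀ g ∈ rtTestSet k 0 1 2, cubeIntegral (q * g) = 0) : q = 0 := by
  obtain ⟨p, Pv, Pw, hp0, hp1, hp2, hPv, hPw, rfl⟩ := hq.exists_toMvPolynomial hk
  have hq (i : Fin 3) (hi : i ≠ 0) (hp : degreeOf i p < k) :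
      degreeOf i (p + X 0 ^ (k + 1) * (Pv.toMvPolynomial 1 + Pw.toMvPolynomial 2)) < k := by
    refine (degreeOf_add_le _ _ _).trans_lt (max_lt hp ((degreeOf_mul_le _ _ _).trans_lt ?_))
    rw [degreeOf_X_pow_of_ne _ hi, zero_add]
    exact (degreeOf_add_le _ _ _).trans_lt (max_lt ((degreeOf_toMvPolynomial_le _ _ _).trans_lt hPv)
      ((degreeOf_toMvPolynomial_le _ _ _).trans_lt hPw))
  have htrace (s : ℝ) (hs : s = 1 ∨ s = -1) :
      faceTrace (p + X 0 ^ (k + 1) * (Pv.toMvPolynomial 1 + Pw.toMvPolynomial 2)) s = 0 := by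
    refine eq_zero_of_forall_integral_mul_pow_eq_zero
      ((degreeOf_faceTrace_le _ _ 0).trans_lt (hq 1 (by decide) hp1))
      ((degreeOf_faceTrace_le _ _ 1).trans_lt (hq 2 (by decide) hp2)) fun a ha b hb => ?_
    simp only [eval_faceTrace]
    exact hface s hs a ha b hb
  obtain ⟨r, hr⟩ := X_zero_sq_sub_one_dvd (htrace 1 (.inl rfl)) (htrace (-1) (.inr rfl))
  have hrspan := mem_span_rtTestSet hk hp0 hp1 hp2 hPv hPw hr.symm
  have hqr := cubeIntegral_mul_eq_zero_of_mem_span horth hrspan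
  rw [hr] at hqr ⊢
  rw [eq_zero_of_cubeIntegral_X_zero_sq_sub_one_mul_self hqr, mul_zero]

/-- `hface` is the face condition of `rename σ q`, whose normal component is along `x`. -/
theorem eq_zero_of_rt_moments_of_perm (σ : Equiv.Perm (Fin 3)) (hu : σ u = 0) (hv : σ v = 1)
    (hw : σ w = 2) (hk : 1 ≤ k) (hq : memRT k u v w q)
    (hface : ∀ s : ℝ, s = 1 ∨ s = -1 → ∀ a < k, ∀ b < k,
      (∫ y in (-1 : ℝ)..1, ∫ z in (-1 : ℝ)..1,
        ev3 q (![s, y, z] (σ 0)) (![s, y, z] (σ 1)) (![s, y, z] (σ 2)) * y ^ a * z ^ b) = 0)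
    (horth : ∀ g ∈ rtTestSet k u v w, cubeIntegral (q * g) = 0) : q = 0 := by
  have hq' := hq.rename σ
  rw [hu, hv, hw] at hq'
  refine (map_eq_zero_iff _ (rename_injective _ σ.injective)).mp <|
    eq_zero_of_rt_moments hk hq' (by simpa only [ev3_rename] using hface) fun g hg => ?_
  have hg' := rename_mem_rtTestSet σ.symm hg
  rw [← hu, ← hv, ← hw, Equiv.symm_apply_apply, Equiv.symm_apply_apply,
    Equiv.symm_apply_apply] at hg'
  have : rename σ q * g = rename σ (q * rename σ.symm g) := by
    rw [map_mul, rename_rename]; simp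
  rw [this, cubeIntegral_rename]
  exact horth _ hg'

end RaviartThomas

/-- Unisolvence of the enriched Raviart–Thomas element of order `k` on the reference cube
`K̂ = [-1,1]³` (Lemma 5.1): a field `q̂ = (q̂₁,q̂₂,q̂₃) ∈ H_k(K̂)` vanishes if
(1) all face moments of `q̂·ν̂` against `Q_{k-1}` vanish,
(2)–(4) all interior moments of `q̂ᵢ` against `J_{k-1}` times `P_{k-1}` in each of the other
variables vanish, and (5) all interior moments against `Ψ_{k-1}(K̂)` vanish. -/
theorem enriched_RT_unisolvence (k : ℕ) (hk : 1 ≤ k)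
    (q1 q2 q3 : MvPolynomial (Fin 3) ℝ)
    (hq1 : memRT k 0 1 2 q1) (hq2 : memRT k 1 2 0 q2) (hq3 : memRT k 2 0 1 q3)
    (hface1 : ∀ s : ℝ, s = 1 ∨ s = -1 → ∀ a < k, ∀ b < k,
      (∫ η in (-1 : ℝ)..1, ∫ ζ in (-1 : ℝ)..1, ev3 q1 s η ζ * η ^ a * ζ ^ b) = 0)
    (hface2 : ∀ s : ℝ, s = 1 ∨ s = -1 → ∀ a < k, ∀ b < k,
      (∫ ξ in (-1 : ℝ)..1, ∫ ζ in (-1 : ℝ)..1, ev3 q2 ξ s ζ * ξ ^ a * ζ ^ b) = 0)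
    (hface3 : ∀ s : ℝ, s = 1 ∨ s = -1 → ∀ a < k, ∀ b < k,
      (∫ ξ in (-1 : ℝ)..1, ∫ η in (-1 : ℝ)..1, ev3 q3 ξ η s * ξ ^ a * η ^ b) = 0)
    (hJ1 : ∀ j < k,
      (∫ ξ in (-1 : ℝ)..1, ∫ η in (-1 : ℝ)..1, ∫ ζ in (-1 : ℝ)..1,
        ev3 q1 ξ η ζ * Jac (k - 1) ξ * η ^ j) = 0 ∧
      (∫ ξ in (-1 : ℝ)..1, ∫ η in (-1 : ℝ)..1, ∫ ζ in (-1 : ℝ)..1,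
        ev3 q1 ξ η ζ * Jac (k - 1) ξ * ζ ^ j) = 0)
    (hJ2 : ∀ j < k,
      (∫ ξ in (-1 : ℝ)..1, ∫ η in (-1 : ℝ)..1, ∫ ζ in (-1 : ℝ)..1,
        ev3 q2 ξ η ζ * Jac (k - 1) η * ξ ^ j) = 0 ∧
      (∫ ξ in (-1 : ℝ)..1, ∫ η in (-1 : ℝ)..1, ∫ ζ in (-1 : ℝ)..1,
        ev3 q2 ξ η ζ * Jac (k - 1) η * ζ ^ j) = 0)
    (hJ3 : ∀ j < k,
      (∫ ξ in (-1 : ℝ)..1, ∫ η in (-1 : ℝ)..1, ∫ ζ in (-1 : ℝ)..1,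
        ev3 q3 ξ η ζ * Jac (k - 1) ζ * ξ ^ j) = 0 ∧
      (∫ ξ in (-1 : ℝ)..1, ∫ η in (-1 : ℝ)..1, ∫ ζ in (-1 : ℝ)..1,
        ev3 q3 ξ η ζ * Jac (k - 1) ζ * η ^ j) = 0)
    (hint1 : ∀ a b c : ℕ, a + 2 ≤ k → b < k → c < k →
      (∫ ξ in (-1 : ℝ)..1, ∫ η in (-1 : ℝ)..1, ∫ ζ in (-1 : ℝ)..1,
        ev3 q1 ξ η ζ * ξ ^ a * η ^ b * ζ ^ c) = 0)
    (hint2 : ∀ a b c : ℕ, a < k → b + 2 ≤ k → c < k →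
      (∫ ξ in (-1 : ℝ)..1, ∫ η in (-1 : ℝ)..1, ∫ ζ in (-1 : ℝ)..1,
        ev3 q2 ξ η ζ * ξ ^ a * η ^ b * ζ ^ c) = 0)
    (hint3 : ∀ a b c : ℕ, a < k → b < k → c + 2 ≤ k →
      (∫ ξ in (-1 : ℝ)..1, ∫ η in (-1 : ℝ)..1, ∫ ζ in (-1 : ℝ)..1,
        ev3 q3 ξ η ζ * ξ ^ a * η ^ b * ζ ^ c) = 0) :
    q1 = 0 ∧ q2 = 0 ∧ q3 = 0 := by
  have horth1 := cubeIntegral_mul_eq_zero_of_moments (u := 0) (v := 1) (w := 2) hJ1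
    fun m => hint1 (m 0) (m 1) (m 2)
  have horth2 := cubeIntegral_mul_eq_zero_of_moments (u := 1) (v := 0) (w := 2) hJ2
    fun m h1 h0 h2 => hint2 (m 0) (m 1) (m 2) h0 h1 h2
  have horth3 := cubeIntegral_mul_eq_zero_of_moments (u := 2) (v := 0) (w := 1) hJ3
    fun m h2 h0 h1 => hint3 (m 0) (m 1) (m 2) h0 h1 h2
  exact ⟨eq_zero_of_rt_moments_of_perm 1 rfl rfl rfl hk hq1 hface1 horth1,
    eq_zero_of_rt_moments_of_perm (Equiv.swap 0 1) rfl rfl rfl hk hq2.symm hface2 horth2,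
    eq_zero_of_rt_moments_of_perm (finRotate 3) rfl rfl rfl hk hq3 hface3 horth3⟩
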